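/- For every 0 < ε < 1/3 and every g ∈ SL₂^±(R), the action of g on b(g⁻, ε) ⊂ P(R²) satisfies: for all x ∈ b(g⁻, ε), −2 log‖g‖ ≤ log|g'(x)| ≤ −2 log‖g‖ − 2 log ε, and |g''(x)| ≤ 10/(ε³‖g‖²). In particular, g restricted to b(g⁻, ε) scales by ‖g‖⁻² with distortion 10ε⁻². -/

import Mathlib

/-!
Write `g = k' ∘ diag(a₀, a₁) ∘ k` and let `u = k⁻¹e₂` span the repelling direction. For a unit
vector `v` at projective distance `d` from `u`, `‖gv‖² = a₁² + (a₀² - a₁²) d²`, so on `b(g⁻, ε)`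
we have `ε‖g‖ < ‖gv‖ ≤ ‖g‖ = a₀`. Since `|det g| = 1`, `g` preserves `|v ∧ w|`: this gives the
distortion of projective distances, and, differentiating the relation `gv(t) ∥ v(F t)` for the
lift `F`, the formula `F' = ± 1 / ‖g v(t)‖²`, from which both derivative bounds follow.
-/

open scoped RealInnerProductSpace
noncomputable section

/-- Projective distance `d(ℝv, ℝw) = ‖v ∧ w‖ / (‖v‖ ‖w‖)`. -/
def projDist {n : ℕ} (v w : EuclideanSpace ℝ (Fin n)) : ℝ :=
  Real.sqrt (‖v‖ ^ 2 * ‖w‖ ^ 2 - ⟪v, w⟫ ^ 2) / (‖v‖ * ‖w‖)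

/-- Distance from the projective point `ℝv` to the projective hyperplane with
normal vector `u`. -/
def distToHyp {n : ℕ} (v u : EuclideanSpace ℝ (Fin n)) : ℝ :=
  |⟪v, u⟫| / (‖v‖ * ‖u‖)

/-- The diagonal map with entries `a`. -/
def diagMap {n : ℕ} (a : Fin n → ℝ) (v : EuclideanSpace ℝ (Fin n)) :
    EuclideanSpace ℝ (Fin n) :=
  (WithLp.equiv 2 (Fin n → ℝ)).symm (fun i => a i * v i)

open Real

/-- The unit vector of angle `π t`. -/
def vecTheta (t : ℝ) : EuclideanSpace ℝ (Fin 2) :=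
  (WithLp.equiv 2 (Fin 2 → ℝ)).symm ![Real.cos (π * t), Real.sin (π * t)]

open Filter Topology

local notation "ℝ²" => EuclideanSpace ℝ (Fin 2)
local notation "e₀" => EuclideanSpace.single (0 : Fin 2) (1 : ℝ)
local notation "e₁" => EuclideanSpace.single (1 : Fin 2) (1 : ℝ)

def wedge (v w : ℝ²) : ℝ := v 0 * w 1 - v 1 * w 0

theorem inner_eq_fin_two (v w : ℝ²) : ⟪v, w⟫ = v 0 * w 0 + v 1 * w 1 := by
  simp only [PiLp.inner_apply, Fin.sum_univ_two, RCLike.inner_apply, conj_trivial]; ring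

theorem norm_sq_eq_fin_two (v : ℝ²) : ‖v‖ ^ 2 = v 0 ^ 2 + v 1 ^ 2 := by
  rw [← real_inner_self_eq_norm_sq, inner_eq_fin_two]; ring

@[simp] theorem wedge_self (v : ℝ²) : wedge v v = 0 := by
  rw [wedge]; ring

@[simp] theorem wedge_smul_left (c : ℝ) (v w : ℝ²) : wedge (c • v) w = c * wedge v w := by
  simp only [wedge, PiLp.smul_apply, smul_eq_mul]; ring

@[simp] theorem wedge_smul_right (c : ℝ) (v w : ℝ²) : wedge v (c • w) = c * wedge v w := by
  simp only [wedge, PiLp.smul_apply, smul_eq_mul]; ring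

theorem wedge_swap (v w : ℝ²) : wedge w v = -wedge v w := by
  rw [wedge, wedge]; ring

theorem wedge_sq_add_inner_sq (v w : ℝ²) : wedge v w ^ 2 + ⟪v, w⟫ ^ 2 = ‖v‖ ^ 2 * ‖w‖ ^ 2 := by
  rw [wedge, inner_eq_fin_two, norm_sq_eq_fin_two, norm_sq_eq_fin_two]; ring

theorem projDist_eq_abs_wedge_div (v w : ℝ²) :
    projDist v w = |wedge v w| / (‖v‖ * ‖w‖) := by
  rw [projDist, ← wedge_sq_add_inner_sq, add_sub_cancel_right, Real.sqrt_sq_eq_abs]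

theorem projDist_of_norm_eq_one {v w : ℝ²} (hv : ‖v‖ = 1) (hw : ‖w‖ = 1) :
    projDist v w = |wedge v w| := by
  rw [projDist_eq_abs_wedge_div, hv, hw, mul_one, div_one]

theorem wedge_map (g : ℝ² →L[ℝ] ℝ²) (v w : ℝ²) :
    wedge (g v) (g w) = wedge (g e₀) (g e₁) * wedge v w := by
  have hdecomp : ∀ x : ℝ², g x = x 0 • g e₀ + x 1 • g e₁ := by
    intro x
    rw [← map_smul, ← map_smul, ← map_add]
    congr 1
    ext i; fin_cases i <;> simp
  rw [hdecomp v, hdecomp w]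
  simp only [wedge, PiLp.add_apply, PiLp.smul_apply, smul_eq_mul]
  ring

theorem wedge_diagMap (a : Fin 2 → ℝ) (v w : ℝ²) :
    wedge (diagMap a v) (diagMap a w) = a 0 * a 1 * wedge v w := by
  simp only [wedge, diagMap, WithLp.equiv_symm_apply]; ring

theorem abs_wedge_map_linearIsometryEquiv (k : ℝ² ≃ₗᵢ[ℝ] ℝ²) (v w : ℝ²) :
    |wedge (k v) (k w)| = |wedge v w| := by
  rw [← sq_eq_sq_iff_abs_eq_abs, ← add_left_inj (⟪v, w⟫ ^ 2), wedge_sq_add_inner_sq,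
    ← k.inner_map_map, wedge_sq_add_inner_sq, k.norm_map, k.norm_map]

theorem LinearIsometryEquiv.apply_eq_inner_symm_single {ι : Type*} [Fintype ι] [DecidableEq ι]
    (k : EuclideanSpace ℝ ι ≃ₗᵢ[ℝ] EuclideanSpace ℝ ι) (v : EuclideanSpace ℝ ι) (i : ι) :
    k v i = ⟪v, k.symm (EuclideanSpace.single i 1)⟫ := by
  rw [← k.inner_map_map, k.apply_symm_apply, EuclideanSpace.inner_single_right, one_mul,
    conj_trivial]

theorem vecTheta_apply_zero (t : ℝ) : vecTheta t 0 = cos (π * t) := rfl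

theorem vecTheta_apply_one (t : ℝ) : vecTheta t 1 = sin (π * t) := rfl

theorem norm_vecTheta (t : ℝ) : ‖vecTheta t‖ = 1 := by
  have h := norm_sq_eq_fin_two (vecTheta t)
  rw [vecTheta_apply_zero, vecTheta_apply_one, cos_sq_add_sin_sq] at h
  exact (pow_eq_one_iff_of_nonneg (norm_nonneg _) two_ne_zero).mp h

theorem vecTheta_add_half_apply_zero (t : ℝ) : vecTheta (t + 1 / 2) 0 = -sin (π * t) := by
  rw [vecTheta_apply_zero, mul_add, mul_one_div, cos_add_pi_div_two]

theorem vecTheta_add_half_apply_one (t : ℝ) : vecTheta (t + 1 / 2) 1 = cos (π * t) := by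
  rw [vecTheta_apply_one, mul_add, mul_one_div, sin_add_pi_div_two]

theorem wedge_vecTheta_vecTheta_add_half (t : ℝ) :
    wedge (vecTheta t) (vecTheta (t + 1 / 2)) = 1 := by
  rw [wedge, vecTheta_add_half_apply_zero, vecTheta_add_half_apply_one, vecTheta_apply_zero,
    vecTheta_apply_one]
  linear_combination cos_sq_add_sin_sq (π * t)

theorem inner_vecTheta_add_half (t : ℝ) (u : ℝ²) :
    ⟪vecTheta (t + 1 / 2), u⟫ = wedge (vecTheta t) u := by
  rw [inner_eq_fin_two, vecTheta_add_half_apply_zero, vecTheta_add_half_apply_one, wedge,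
    vecTheta_apply_zero, vecTheta_apply_one]
  ring

theorem hasDerivAt_vecTheta (t : ℝ) : HasDerivAt vecTheta (π • vecTheta (t + 1 / 2)) t := by
  have hlin : HasDerivAt (fun s : ℝ => π * s) π t := by
    simpa using (hasDerivAt_id t).const_mul π
  have hfun : vecTheta = fun s => cos (π * s) • e₀ + sin (π * s) • e₁ := by
    funext s; ext i; fin_cases i <;> simp [vecTheta_apply_zero, vecTheta_apply_one]
  have hval : π • vecTheta (t + 1 / 2) = (-sin (π * t) * π) • e₀ + (cos (π * t) * π) • e₁ := by
    ext i; fin_cases i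
    · simp [vecTheta_add_half_apply_zero, -one_div, mul_comm]
    · simp [vecTheta_add_half_apply_one, -one_div, mul_comm]
  rw [hval, hfun]
  exact (hlin.cos.smul_const e₀).add (hlin.sin.smul_const e₁)

theorem hasDerivAt_inner_vecTheta (u : ℝ²) (t : ℝ) :
    HasDerivAt (fun s => ⟪vecTheta s, u⟫) (π * wedge (vecTheta t) u) t := by
  simpa [inner_smul_left, inner_vecTheta_add_half, -one_div] using
    (hasDerivAt_vecTheta t).inner ℝ (hasDerivAt_const t u)

theorem HasDerivAt.wedge {v w : ℝ → ℝ²} {v' w' : ℝ²} {s : ℝ} (hv : HasDerivAt v v' s)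
    (hw : HasDerivAt w w' s) :
    HasDerivAt (fun r => _root_.wedge (v r) (w r))
      (_root_.wedge v' (w s) + _root_.wedge (v s) w') s := by
  have coord : ∀ {f : ℝ → ℝ²} {f' : ℝ²} (i : Fin 2),
      HasDerivAt f f' s → HasDerivAt (fun r => f r i) (f' i) s :=
    fun i hf => (EuclideanSpace.proj (𝕜 := ℝ) (ι := Fin 2) i).hasFDerivAt.comp_hasDerivAt s hf
  refine (((coord 0 hv).mul (coord 1 hw)).sub ((coord 1 hv).mul (coord 0 hw))).congr_deriv ?_
  simp only [_root_.wedge]; ring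

theorem pi_mul_deriv_mul_norm_sq_eq_wedge {w : ℝ → ℝ²} {w' : ℝ²} {θ : ℝ → ℝ} {s : ℝ}
    (hw : HasDerivAt w w' s) (hθ : DifferentiableAt ℝ θ s)
    (hpolar : ∀ᶠ r in 𝓝 s, ∃ c : ℝ, w r = c • vecTheta (θ r)) :
    π * deriv θ s * ‖w s‖ ^ 2 = wedge (w s) w' := by
  obtain ⟨c, hc⟩ := hpolar.self_of_nhds
  have hV : HasDerivAt (fun r => vecTheta (θ r)) (deriv θ s • π • vecTheta (θ s + 1 / 2)) s :=
    (hasDerivAt_vecTheta (θ s)).scomp s hθ.hasDerivAt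
  have hparallel : HasDerivAt (fun r => wedge (w r) (vecTheta (θ r))) 0 s := by
    refine (hasDerivAt_const s (0 : ℝ)).congr_of_eventuallyEq ?_
    filter_upwards [hpolar] with r ⟨c, hc⟩
    simp [hc]
  have h := (hw.wedge hV).unique hparallel
  rw [hc, wedge_smul_right, wedge_smul_right, wedge_smul_left,
    wedge_vecTheta_vecTheta_add_half, wedge_swap] at h
  rw [hc, norm_smul, norm_vecTheta, wedge_smul_left, Real.norm_eq_abs, mul_one, sq_abs]
  linear_combination c * h

theorem deriv_lift_eq {g : ℝ² →L[ℝ] ℝ²} {F : ℝ → ℝ} {t : ℝ} (hF : DifferentiableAt ℝ F t)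
    (hlift : ∀ᶠ r in 𝓝 t, ∃ c : ℝ, g (vecTheta r) = c • vecTheta (F r))
    (hne : g (vecTheta t) ≠ 0) :
    deriv F t = wedge (g e₀) (g e₁) / ‖g (vecTheta t)‖ ^ 2 := by
  have hw : HasDerivAt (fun r => g (vecTheta r)) (g (π • vecTheta (t + 1 / 2))) t :=
    g.hasFDerivAt.comp_hasDerivAt t (hasDerivAt_vecTheta t)
  have h := pi_mul_deriv_mul_norm_sq_eq_wedge hw hF hlift
  rw [map_smul, wedge_smul_right, wedge_map, wedge_vecTheta_vecTheta_add_half, mul_one] at h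
  rw [eq_div_iff (pow_ne_zero 2 (norm_ne_zero_iff.mpr hne))]
  exact mul_left_cancel₀ pi_ne_zero (by linear_combination h)

theorem logb_inv_sq_mem_Icc {q ε m x : ℝ} (hq : 1 < q) (hε : 0 < ε) (hm : 0 < m)
    (hlow : ε * m ≤ x) (hup : x ≤ m) :
    logb q (x ^ 2)⁻¹ ∈ Set.Icc (-(2 * logb q m)) (-(2 * logb q m) - 2 * logb q ε) := by
  have hx : 0 < x := (mul_pos hε hm).trans_le hlow
  have hlog_up := logb_le_logb_of_le hq hx hup
  have hlog_low := logb_le_logb_of_le hq (mul_pos hε hm) hlow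
  rw [logb_mul hε.ne' hm.ne'] at hlog_low
  rw [logb_inv, logb_pow, Nat.cast_ofNat]
  constructor <;> linarith

section Cartan

variable {g : ℝ² →L[ℝ] ℝ²}
  {k k' : ℝ² ≃ₗᵢ[ℝ] ℝ²} {a : Fin 2 → ℝ}

theorem norm_sq_apply_of_cartan (hg : ∀ v, g v = k' (diagMap a (k v))) (v : ℝ²) :
    ‖g v‖ ^ 2 = a 0 ^ 2 * ‖v‖ ^ 2 - (a 0 ^ 2 - a 1 ^ 2) * ⟪v, k.symm e₁⟫ ^ 2 := by
  rw [hg, k'.norm_map, norm_sq_eq_fin_two, ← k.norm_map, norm_sq_eq_fin_two,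
    ← k.apply_eq_inner_symm_single]
  simp only [diagMap, WithLp.equiv_symm_apply]
  ring

theorem opNorm_eq_of_cartan (hg : ∀ v, g v = k' (diagMap a (k v))) (ha1 : 0 ≤ a 1)
    (hmono : a 1 ≤ a 0) : ‖g‖ = a 0 := by
  have hgap : 0 ≤ a 0 ^ 2 - a 1 ^ 2 := by nlinarith
  refine le_antisymm (g.opNorm_le_bound (ha1.trans hmono) fun v => ?_) ?_
  · refine (pow_le_pow_iff_left₀ (norm_nonneg _) (mul_nonneg (ha1.trans hmono) (norm_nonneg v))
      two_ne_zero).mp ?_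
    rw [norm_sq_apply_of_cartan hg, mul_pow]
    nlinarith [mul_nonneg hgap (sq_nonneg ⟪v, k.symm e₁⟫)]
  · set x := k.symm e₀
    have hx : ‖x‖ = 1 := by simp [x]
    have horth : ⟪x, k.symm e₁⟫ = 0 := by
      simp [x, k.symm.inner_map_map, EuclideanSpace.inner_single_right]
    have hgx : ‖g x‖ = a 0 := by
      refine (pow_left_inj₀ (norm_nonneg _) (ha1.trans hmono) two_ne_zero).mp ?_
      rw [norm_sq_apply_of_cartan hg, hx, horth]
      ring
    simpa [hgx, hx] using g.le_opNorm x

theorem abs_wedge_apply_of_cartan (hg : ∀ v, g v = k' (diagMap a (k v))) (hdet : a 0 * a 1 = 1)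
    (v w : ℝ²) : |wedge (g v) (g w)| = |wedge v w| := by
  rw [hg, hg, abs_wedge_map_linearIsometryEquiv, wedge_diagMap, hdet, one_mul,
    abs_wedge_map_linearIsometryEquiv]

theorem abs_wedge_apply_basis_of_cartan (hg : ∀ v, g v = k' (diagMap a (k v)))
    (hdet : a 0 * a 1 = 1) : |wedge (g e₀) (g e₁)| = 1 := by
  rw [abs_wedge_apply_of_cartan hg hdet]
  simp [wedge]

theorem mul_projDist_le_norm_apply_of_cartan (hg : ∀ v, g v = k' (diagMap a (k v)))
    (ha1 : 0 ≤ a 1) (hmono : a 1 ≤ a 0) {v : ℝ²} (hv : ‖v‖ = 1) :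
    a 0 * projDist v (k.symm e₁) ≤ ‖g v‖ := by
  set u := k.symm e₁
  have hu : ‖u‖ = 1 := by simp [u]
  have hpyth : wedge v u ^ 2 + ⟪v, u⟫ ^ 2 = 1 := by rw [wedge_sq_add_inner_sq, hv, hu]; norm_num
  rw [projDist_of_norm_eq_one hv hu]
  refine (pow_le_pow_iff_left₀ (mul_nonneg (ha1.trans hmono) (abs_nonneg _)) (norm_nonneg _)
    two_ne_zero).mp ?_
  rw [norm_sq_apply_of_cartan hg, hv, mul_pow, sq_abs]
  nlinarith [mul_nonneg (sq_nonneg (a 1)) (sq_nonneg ⟪v, u⟫)]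

theorem mul_le_norm_apply_and_norm_apply_le_of_cartan (hg : ∀ v, g v = k' (diagMap a (k v)))
    (ha1 : 0 ≤ a 1) (hmono : a 1 ≤ a 0) {ε : ℝ} {v : ℝ²} (hv : ‖v‖ = 1)
    (hεv : ε ≤ projDist v (k.symm e₁)) :
    ε * a 0 ≤ ‖g v‖ ∧ ‖g v‖ ≤ a 0 := by
  constructor
  · calc ε * a 0 ≤ a 0 * projDist v (k.symm e₁) := by
          rw [mul_comm]; exact mul_le_mul_of_nonneg_left hεv (ha1.trans hmono)
      _ ≤ ‖g v‖ := mul_projDist_le_norm_apply_of_cartan hg ha1 hmono hv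
  · simpa [hv, opNorm_eq_of_cartan hg ha1 hmono] using g.le_opNorm v

theorem abs_deriv_deriv_le_of_cartan (hg : ∀ v, g v = k' (diagMap a (k v))) (ha1 : 0 < a 1)
    (hmono : a 1 ≤ a 0) {F : ℝ → ℝ} {D : ℝ} (hD : |D| = 1)
    (hder : ∀ t, deriv F t = D / ‖g (vecTheta t)‖ ^ 2) {t : ℝ}
    (hd : 0 < projDist (vecTheta t) (k.symm e₁)) :
    |deriv (deriv F) t| ≤ 2 * π / (a 0 ^ 2 * projDist (vecTheta t) (k.symm e₁) ^ 3) := by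
  set u := k.symm e₁
  set d := projDist (vecTheta t) u
  set p : ℝ → ℝ := fun s => ⟪vecTheta s, u⟫
  have hu : ‖u‖ = 1 := by simp [u]
  have hgap : 0 ≤ a 0 ^ 2 - a 1 ^ 2 := by nlinarith
  have hd_eq : d = |wedge (vecTheta t) u| := projDist_of_norm_eq_one (norm_vecTheta t) hu
  have hp_le : |p t| ≤ 1 := by
    have h := wedge_sq_add_inner_sq (vecTheta t) u
    rw [norm_vecTheta, hu] at h
    exact (sq_le_one_iff_abs_le_one _).mp (by nlinarith [sq_nonneg (wedge (vecTheta t) u)])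
  have hQ : (fun s => ‖g (vecTheta s)‖ ^ 2) = fun s => a 0 ^ 2 - (a 0 ^ 2 - a 1 ^ 2) * p s ^ 2 := by
    funext s; rw [norm_sq_apply_of_cartan hg, norm_vecTheta, one_pow, mul_one]
  have hQ' : HasDerivAt (fun s => ‖g (vecTheta s)‖ ^ 2)
      (-(2 * (a 0 ^ 2 - a 1 ^ 2) * p t * π * wedge (vecTheta t) u)) t := by
    rw [hQ]
    exact ((((hasDerivAt_inner_vecTheta u t).pow 2).const_mul _).const_sub _).congr_deriv (by ring)
  have ha0d : 0 < a 0 * d := mul_pos (ha1.trans_le hmono) hd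
  have hQ_ge : (a 0 * d) ^ 2 ≤ ‖g (vecTheta t)‖ ^ 2 :=
    pow_le_pow_left₀ ha0d.le (mul_projDist_le_norm_apply_of_cartan hg ha1.le hmono
      (norm_vecTheta t)) 2
  have hF'' : HasDerivAt (fun s => D / ‖g (vecTheta s)‖ ^ 2) _ t :=
    (hasDerivAt_const t D).div hQ' ((pow_pos ha0d 2).trans_le hQ_ge).ne'
  rw [show deriv F = fun s => D / ‖g (vecTheta s)‖ ^ 2 from funext hder, hF''.deriv]
  calc _ = 2 * (a 0 ^ 2 - a 1 ^ 2) * |p t| * π * d / (‖g (vecTheta t)‖ ^ 2) ^ 2 := by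
        rw [abs_div, abs_of_nonneg (by positivity : (0 : ℝ) ≤ (‖g (vecTheta t)‖ ^ 2) ^ 2), hd_eq]
        congr 1
        rw [zero_mul, zero_sub, abs_neg, abs_mul, hD, one_mul, abs_neg]
        simp only [abs_mul, abs_two, abs_of_pos pi_pos, abs_of_nonneg hgap]
    _ ≤ 2 * a 0 ^ 2 * 1 * π * d / ((a 0 * d) ^ 2) ^ 2 := by
        gcongr
        nlinarith
    _ = 2 * π / (a 0 ^ 2 * d ^ 3) := by
        field_simp

theorem projDist_apply_div_mem_Icc_of_cartan (hg : ∀ v, g v = k' (diagMap a (k v)))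
    (ha1 : 0 < a 1) (hmono : a 1 ≤ a 0) (hdet : a 0 * a 1 = 1) {ε : ℝ} (hε : 0 < ε)
    {x x' : ℝ²} (hx : ‖x‖ = 1) (hx' : ‖x'‖ = 1) (hεx : ε ≤ projDist x (k.symm e₁))
    (hεx' : ε ≤ projDist x' (k.symm e₁)) (hne : projDist x x' ≠ 0) :
    projDist (g x) (g x') / ((a 0 ^ 2)⁻¹ * projDist x x') ∈ Set.Icc 1 (ε⁻¹ ^ 2) := by
  obtain ⟨hlow, hup⟩ := mul_le_norm_apply_and_norm_apply_le_of_cartan hg ha1.le hmono hx hεx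
  obtain ⟨hlow', hup'⟩ := mul_le_norm_apply_and_norm_apply_le_of_cartan hg ha1.le hmono hx' hεx'
  have ha0 : 0 < a 0 := ha1.trans_le hmono
  have hεa0 : 0 < ε * a 0 := mul_pos hε ha0
  have hprod : 0 < ‖g x‖ * ‖g x'‖ := mul_pos (hεa0.trans_le hlow) (hεa0.trans_le hlow')
  have hratio : projDist (g x) (g x') / ((a 0 ^ 2)⁻¹ * projDist x x') =
      a 0 ^ 2 / (‖g x‖ * ‖g x'‖) := by
    rw [projDist_eq_abs_wedge_div, abs_wedge_apply_of_cartan hg hdet,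
      ← projDist_of_norm_eq_one hx hx']
    field_simp
  rw [hratio]
  constructor
  · rw [one_le_div hprod, sq]
    exact mul_le_mul hup hup' (norm_nonneg _) ha0.le
  · rw [div_le_iff₀ hprod, inv_pow, ← div_eq_inv_mul, le_div_iff₀ (by positivity)]
    calc a 0 ^ 2 * ε ^ 2 = (ε * a 0) * (ε * a 0) := by ring
      _ ≤ ‖g x‖ * ‖g x'‖ := mul_le_mul hlow hlow' hεa0.le (norm_nonneg _)

end Cartan

theorem sl2pm_bounded_distortion_on_repelling_complement
    (q : ℝ) (hq : 1 < q)
    (ε : ℝ) (hε0 : 0 < ε) (hε : ε < 1 / 3)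
    (g : EuclideanSpace ℝ (Fin 2) →L[ℝ] EuclideanSpace ℝ (Fin 2))
    (k k' : EuclideanSpace ℝ (Fin 2) ≃ₗᵢ[ℝ] EuclideanSpace ℝ (Fin 2))
    (a : Fin 2 → ℝ) (ha : ∀ i, 0 < a i) (hmono : a 1 ≤ a 0)
    (hdet : a 0 * a 1 = 1)
    (hg : ∀ v, g v = k' (diagMap a (k v))) :
    -- derivative bounds on `b(g⁻, ε)`, via any C² lift `F` of the circle map
    (∀ F : ℝ → ℝ, ContDiff ℝ 2 F →
      (∀ t : ℝ, ∃ c : ℝ, c ≠ 0 ∧ g (vecTheta t) = c • vecTheta (F t)) →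
      ∀ t : ℝ,
        ε < projDist (vecTheta t) (k.symm (EuclideanSpace.single (1 : Fin 2) 1)) →
        (-(2 * Real.logb q ‖g‖) ≤ Real.logb q |deriv F t| ∧
          Real.logb q |deriv F t| ≤ -(2 * Real.logb q ‖g‖) - 2 * Real.logb q ε ∧
          |deriv (deriv F) t| ≤ 10 / (ε ^ 3 * ‖g‖ ^ 2))) ∧
    -- in particular, `g` scales `b(g⁻, ε)` by `‖g‖⁻²` with distortion `10 ε⁻²`
    (∀ x x' : EuclideanSpace ℝ (Fin 2), ‖x‖ = 1 → ‖x'‖ = 1 →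
      ε < projDist x (k.symm (EuclideanSpace.single (1 : Fin 2) 1)) →
      ε < projDist x' (k.symm (EuclideanSpace.single (1 : Fin 2) 1)) →
      projDist x x' ≠ 0 →
      (10 * ε⁻¹ ^ 2)⁻¹ ≤ projDist (g x) (g x') / ((‖g‖ ^ 2)⁻¹ * projDist x x') ∧
        projDist (g x) (g x') / ((‖g‖ ^ 2)⁻¹ * projDist x x') ≤ 10 * ε⁻¹ ^ 2) := by
  have ha0 : 0 < a 0 := (ha 1).trans_le hmono
  rw [opNorm_eq_of_cartan hg (ha 1).le hmono]
  refine ⟨fun F hF hlift t ht => ?_, fun x x' hx hx' hεx hεx' hne => ?_⟩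
  · have hder : ∀ s, deriv F s = wedge (g e₀) (g e₁) / ‖g (vecTheta s)‖ ^ 2 := fun s =>
      have ⟨c, hc, hgc⟩ := hlift s
      deriv_lift_eq (hF.differentiable two_ne_zero s)
        (Eventually.of_forall fun r => (hlift r).imp fun _ => And.right)
        (by rw [hgc]; exact smul_ne_zero hc (norm_ne_zero_iff.mp (by simp [norm_vecTheta])))
    have hD := abs_wedge_apply_basis_of_cartan hg hdet
    have habs : |deriv F t| = (‖g (vecTheta t)‖ ^ 2)⁻¹ := by
      rw [hder, abs_div, hD, abs_of_nonneg (sq_nonneg _), one_div]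
    obtain ⟨hlow, hup⟩ := mul_le_norm_apply_and_norm_apply_le_of_cartan hg (ha 1).le hmono
      (norm_vecTheta t) ht.le
    obtain ⟨hlog_low, hlog_up⟩ := logb_inv_sq_mem_Icc hq hε0 ha0 hlow hup
    refine ⟨habs ▸ hlog_low, habs ▸ hlog_up, ?_⟩
    calc |deriv (deriv F) t| ≤ 2 * π / (a 0 ^ 2 * projDist (vecTheta t) (k.symm e₁) ^ 3) :=
        abs_deriv_deriv_le_of_cartan hg (ha 1) hmono hD hder (hε0.trans ht)
      _ ≤ 10 / (ε ^ 3 * a 0 ^ 2) := by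
        rw [mul_comm (ε ^ 3)]
        gcongr
        linarith [pi_le_four]
  · obtain ⟨h1, h2⟩ := projDist_apply_div_mem_Icc_of_cartan hg (ha 1) hmono hdet hε0 hx hx'
      hεx.le hεx'.le hne
    have hε2 : ε ^ 2 ≤ 10 := by nlinarith
    refine ⟨le_trans ?_ h1, h2.trans (le_mul_of_one_le_left (by positivity) (by norm_num))⟩
    rw [inv_pow, mul_inv, inv_inv]
    linarith
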